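/- Let (X,Y) have joint pmf P_{XY} on finite alphabets 𝒳 × 𝒴 with full-support marginals, and suppose I(X;Y) > 0. Then s*(X;Y) equals the supremum, over all finite alphabets 𝒰 and all joint pmfs of (U,X,Y) of the form p(u,x) P_{Y|X}(y|x) whose (X,Y)-marginal is P_{XY} and for which I(X;U) > 0, of the ratio I(Y;U)/I(X;U). In particular, the constant s*(X;Y) in the strong data processing inequality I(Y;U) ≤ s*(X;Y) I(X;U) is tight: it cannot be replaced by any smaller constant. -/

import Mathlib

/-!
Disintegrate a Markov chain `U ↔ X ↔ Y` into weights `p(u)` and conditionals `Q_u = P_{X|U=u}`: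
then `I(X;U) = ∑ p(u) D(Q_u ‖ P_X)` and `I(Y;U) = ∑ p(u) D(Q_u W ‖ P_Y)`, where `W = P_{Y|X}`,
so every ratio `I(Y;U) / I(X;U)` is at most `s*`. Conversely, for a fixed `Q`, the binary chain
with `P(U = 1) = ε`, `Q_1 = Q` and `Q_0 = (P_X - ε Q) / (1 - ε)` has `D(Q_0 ‖ P_X) = O(ε²)` (a
`χ²` bound), so its ratio tends to `D(Q W ‖ P_Y) / D(Q ‖ P_X)` as `ε → 0`.
-/

open scoped BigOperators

noncomputable section

/-- A probability mass function on a finite type, as a real-valued function. -/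
def IsPMF {α : Type*} [Fintype α] (p : α → ℝ) : Prop :=
  (∀ a, 0 ≤ p a) ∧ ∑ a, p a = 1

/-- Kullback–Leibler divergence `D(q ‖ p)` between pmfs on a finite type. -/
def klDiv {α : Type*} [Fintype α] (q p : α → ℝ) : ℝ :=
  ∑ a, q a * Real.logb 2 (q a / p a)

variable {𝓧 𝓨 : Type*} [Fintype 𝓧] [Fintype 𝓨]

/-- x-marginal of a joint pmf. -/
def margX (P : 𝓧 → 𝓨 → ℝ) (x : 𝓧) : ℝ := ∑ y, P x y

/-- y-marginal of a joint pmf. -/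
def margY (P : 𝓧 → 𝓨 → ℝ) (y : 𝓨) : ℝ := ∑ x, P x y

/-- Output distribution of channel `P_{Y|X}` (from joint pmf `P`) driven by input `Q`. -/
def chanOut (P : 𝓧 → 𝓨 → ℝ) (Q : 𝓧 → ℝ) (y : 𝓨) : ℝ :=
  ∑ x, Q x * (P x y / margX P x)

/-- `s*(X;Y)`, for `(X,Y)` with joint pmf `P`. -/
def sStar (P : 𝓧 → 𝓨 → ℝ) : ℝ :=
  sSup { r : ℝ | ∃ Q : 𝓧 → ℝ, IsPMF Q ∧ Q ≠ margX P ∧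
    r = klDiv (chanOut P Q) (margY P) / klDiv Q (margX P) }

/-- Mutual information `I(X;Y)` of a joint pmf. -/
def mutualInfo (P : 𝓧 → 𝓨 → ℝ) : ℝ :=
  ∑ x, ∑ y, P x y * Real.logb 2 (P x y / (margX P x * margY P y))

/-- swapped joint pmf, for `s*(Y;X)` etc. -/
def swap (P : 𝓧 → 𝓨 → ℝ) : 𝓨 → 𝓧 → ℝ := fun y x => P x y

/-- n-fold memoryless extension of a joint source. -/
def iid (P : 𝓧 → 𝓨 → ℝ) (n : ℕ) : (Fin n → 𝓧) → (Fin n → 𝓨) → ℝ :=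
  fun xs ys => ∏ i, P (xs i) (ys i)

open Finset Real

section KullbackLeibler

variable {α : Type*} [Fintype α]

lemma sub_le_mul_log_div {x y : ℝ} (hx : 0 ≤ x) (hy : 0 ≤ y) (hxy : 0 < x → 0 < y) :
    x - y ≤ x * log (x / y) := by
  rcases hx.eq_or_lt with rfl | hx
  · simpa using hy
  have h := one_sub_inv_le_log_of_pos (div_pos hx (hxy hx))
  rw [inv_div] at h
  calc x - y = x * (1 - y / x) := by field_simp
    _ ≤ x * log (x / y) := mul_le_mul_of_nonneg_left h hx.le

lemma mul_log_div_le {x y : ℝ} (hx : 0 ≤ x) (hy : 0 < y) :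
    x * log (x / y) ≤ (x - y) ^ 2 / y + (x - y) := by
  rcases hx.eq_or_lt with rfl | hx
  · field_simp; ring_nf; rfl
  calc x * log (x / y) ≤ x * (x / y - 1) :=
        mul_le_mul_of_nonneg_left (log_le_sub_one_of_pos (div_pos hx hy)) hx.le
    _ = (x - y) ^ 2 / y + (x - y) := by field_simp; ring

lemma klDiv_eq_sum_mul_log_div (q p : α → ℝ) :
    klDiv q p = (∑ a, q a * log (q a / p a)) / log 2 := by
  simp only [klDiv, logb, Finset.sum_div, mul_div_assoc]

@[simp]
lemma klDiv_self (p : α → ℝ) : klDiv p p = 0 :=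
  Finset.sum_eq_zero fun a _ => by by_cases h : p a = 0 <;> simp [h]

lemma klDiv_nonneg {q p : α → ℝ} (hq : IsPMF q) (hp0 : ∀ a, 0 ≤ p a) (hp1 : ∑ a, p a ≤ 1)
    (hqp : ∀ a, 0 < q a → 0 < p a) : 0 ≤ klDiv q p := by
  rw [klDiv_eq_sum_mul_log_div]
  refine div_nonneg ?_ (log_nonneg one_le_two)
  calc (0 : ℝ) ≤ ∑ a, (q a - p a) := by rw [Finset.sum_sub_distrib, hq.2]; linarith
    _ ≤ _ := Finset.sum_le_sum fun a _ => sub_le_mul_log_div (hq.1 a) (hp0 a) (hqp a)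

def chiSqDiv (q p : α → ℝ) : ℝ := ∑ a, (q a - p a) ^ 2 / p a

lemma klDiv_le_chiSqDiv {q p : α → ℝ} (hq0 : ∀ a, 0 ≤ q a) (hp0 : ∀ a, 0 < p a)
    (hqp : ∑ a, q a = ∑ a, p a) : klDiv q p ≤ chiSqDiv q p / log 2 := by
  rw [klDiv_eq_sum_mul_log_div]
  refine div_le_div_of_nonneg_right ?_ (log_nonneg one_le_two)
  calc ∑ a, q a * log (q a / p a) ≤ ∑ a, ((q a - p a) ^ 2 / p a + (q a - p a)) :=
        Finset.sum_le_sum fun a _ => mul_log_div_le (hq0 a) (hp0 a)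
    _ = chiSqDiv q p := by rw [Finset.sum_add_distrib, Finset.sum_sub_distrib, hqp]; simp [chiSqDiv]

lemma chiSqDiv_sub_mul_div (p q : α → ℝ) {ε : ℝ} (hε : ε ≠ 1) :
    chiSqDiv (fun a => (p a - ε * q a) / (1 - ε)) p = (ε / (1 - ε)) ^ 2 * chiSqDiv q p := by
  have h1ε : 1 - ε ≠ 0 := sub_ne_zero.2 hε.symm
  simp only [chiSqDiv, Finset.mul_sum]
  refine Finset.sum_congr rfl fun a _ => ?_
  rw [show (p a - ε * q a) / (1 - ε) - p a = ε / (1 - ε) * (p a - q a) by field_simp; ring,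
    mul_pow, mul_div_assoc, sub_sq_comm]

lemma sum_mul_log_div_sum_le {a b : α → ℝ} (ha : ∀ i, 0 ≤ a i) (hb : ∀ i, 0 ≤ b i)
    (hab : ∀ i, 0 < a i → 0 < b i) :
    (∑ i, a i) * log ((∑ i, a i) / ∑ i, b i) ≤ ∑ i, a i * log (a i / b i) := by
  rcases (Finset.sum_nonneg fun i _ => ha i : 0 ≤ ∑ i, a i).eq_or_lt with hA | hA
  · rw [← hA, zero_mul]
    exact Finset.sum_nonneg fun i _ => by
      have : a i = 0 := (Finset.sum_eq_zero_iff_of_nonneg fun i _ => ha i).1 hA.symm i (mem_univ i)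
      simp [this]
  obtain ⟨i, -, hi⟩ := Finset.exists_ne_zero_of_sum_ne_zero hA.ne'
  set A := ∑ i, a i
  set B := ∑ i, b i
  have hB : 0 < B := (hab i ((ha i).lt_of_ne' hi)).trans_le
    (Finset.single_le_sum (fun j _ => hb j) (mem_univ i))
  -- scaling `b` by `A / B` makes both sides have total mass `A`
  have key : ∀ i, a i * log (A / B) + (a i - A / B * b i) ≤ a i * log (a i / b i) := by
    intro i
    rcases (ha i).eq_or_lt with h | hai
    · rw [← h]; simpa using mul_nonneg (div_nonneg hA.le hB.le) (hb i)
    have hbi := hab i hai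
    have := sub_le_mul_log_div (ha i) (mul_nonneg (div_nonneg hA.le hB.le) (hb i))
      fun _ => by positivity
    rw [show a i / (A / B * b i) = a i / b i / (A / B) by field_simp,
      log_div (by positivity) (by positivity)] at this
    linarith
  calc A * log (A / B) = ∑ i, (a i * log (A / B) + (a i - A / B * b i)) := by
        rw [Finset.sum_add_distrib, Finset.sum_sub_distrib, ← Finset.sum_mul, ← Finset.mul_sum,
          div_mul_cancel₀ A hB.ne', sub_self, add_zero]
    _ ≤ _ := Finset.sum_le_sum fun i _ => key i

end KullbackLeibler

section Channel

variable {P : 𝓧 → 𝓨 → ℝ}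

lemma sum_margX (hP : IsPMF (fun p : 𝓧 × 𝓨 => P p.1 p.2)) : ∑ x, margX P x = 1 := by
  rw [← hP.2, Fintype.sum_prod_type]; rfl

lemma sum_margY (hP : IsPMF (fun p : 𝓧 × 𝓨 => P p.1 p.2)) : ∑ y, margY P y = 1 := by
  rw [← hP.2, Fintype.sum_prod_type, Finset.sum_comm]; rfl

lemma chanOut_nonneg (hP : ∀ x y, 0 ≤ P x y) (hX : ∀ x, 0 < margX P x) {Q : 𝓧 → ℝ}
    (hQ : ∀ x, 0 ≤ Q x) (y : 𝓨) : 0 ≤ chanOut P Q y :=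
  Finset.sum_nonneg fun x _ => mul_nonneg (hQ x) (div_nonneg (hP x y) (hX x).le)

lemma sum_div_margX {ι κ : Type*} [Fintype κ] {P : ι → κ → ℝ} (hX : ∀ x, 0 < margX P x)
    (x : ι) : ∑ y, P x y / margX P x = 1 := by
  rw [← Finset.sum_div]; exact div_self (hX x).ne'

lemma sum_chanOut (hX : ∀ x, 0 < margX P x) (Q : 𝓧 → ℝ) : ∑ y, chanOut P Q y = ∑ x, Q x := by
  simp only [chanOut]
  rw [Finset.sum_comm]
  refine Finset.sum_congr rfl fun x _ => ?_
  rw [← Finset.mul_sum, sum_div_margX hX x, mul_one]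

lemma chanOut_const_mul (c : ℝ) (Q : 𝓧 → ℝ) (y : 𝓨) :
    chanOut P (fun x => c * Q x) y = c * chanOut P Q y := by
  simp only [chanOut, Finset.mul_sum, mul_assoc]

lemma sum_chanOut_apply {ι : Type*} [Fintype ι] (Q : ι → 𝓧 → ℝ) (y : 𝓨) :
    ∑ i, chanOut P (Q i) y = chanOut P (fun x => ∑ i, Q i x) y := by
  simp only [chanOut, Finset.sum_mul]
  exact Finset.sum_comm

lemma chanOut_margX (hX : ∀ x, 0 < margX P x) : chanOut P (margX P) = margY P := by
  funext y
  exact Finset.sum_congr rfl fun x _ => mul_div_cancel₀ _ (hX x).ne'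

lemma margY_pos_of_chanOut_pos (hP : ∀ x y, 0 ≤ P x y) {Q : 𝓧 → ℝ} {y : 𝓨}
    (h : 0 < chanOut P Q y) : 0 < margY P y := by
  obtain ⟨x, -, hx⟩ := Finset.exists_ne_zero_of_sum_ne_zero h.ne'
  have hPxy : P x y ≠ 0 := fun h0 => hx (by simp [h0])
  exact ((hP x y).lt_of_ne' hPxy).trans_le (Finset.single_le_sum (fun x _ => hP x y) (mem_univ x))

lemma klDiv_chanOut_nonneg (hP : IsPMF (fun p : 𝓧 × 𝓨 => P p.1 p.2)) (hX : ∀ x, 0 < margX P x)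
    {Q : 𝓧 → ℝ} (hQ : IsPMF Q) : 0 ≤ klDiv (chanOut P Q) (margY P) :=
  have hP0 : ∀ x y, 0 ≤ P x y := fun x y => hP.1 (x, y)
  klDiv_nonneg ⟨chanOut_nonneg hP0 hX hQ.1, by rw [sum_chanOut hX, hQ.2]⟩
    (fun y => Finset.sum_nonneg fun x _ => hP0 x y) (sum_margY hP).le
    fun _ => margY_pos_of_chanOut_pos hP0

lemma klDiv_chanOut_le (hP : ∀ x y, 0 ≤ P x y) (hX : ∀ x, 0 < margX P x) {Q : 𝓧 → ℝ}
    (hQ : ∀ x, 0 ≤ Q x) : klDiv (chanOut P Q) (margY P) ≤ klDiv Q (margX P) := by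
  rw [klDiv_eq_sum_mul_log_div, klDiv_eq_sum_mul_log_div]
  refine div_le_div_of_nonneg_right ?_ (log_nonneg one_le_two)
  have hsplit : ∀ x, Q x * log (Q x / margX P x) =
      ∑ y, Q x * (P x y / margX P x) * log (Q x * (P x y / margX P x) / P x y) := by
    intro x
    rw [← one_mul (Q x * _), ← sum_div_margX hX x, Finset.sum_mul]
    refine Finset.sum_congr rfl fun y _ => ?_
    rcases (hP x y).eq_or_lt with h | h
    · simp [← h]
    · rw [show Q x * (P x y / margX P x) / P x y = Q x / margX P x by field_simp]
      ring
  calc ∑ y, chanOut P Q y * log (chanOut P Q y / margY P y)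
      ≤ ∑ y, ∑ x, Q x * (P x y / margX P x) * log (Q x * (P x y / margX P x) / P x y) :=
        Finset.sum_le_sum fun y _ => sum_mul_log_div_sum_le
          (fun x => mul_nonneg (hQ x) (div_nonneg (hP x y) (hX x).le)) (fun x => hP x y)
          fun x hx => (hP x y).lt_of_ne' fun h0 => by simp [h0] at hx
    _ = ∑ x, Q x * log (Q x / margX P x) := by rw [Finset.sum_comm]; simp only [hsplit]

end Channel

section StrongDataProcessing

variable {P : 𝓧 → 𝓨 → ℝ}

lemma klDiv_margX_nonneg (hP : IsPMF (fun p : 𝓧 × 𝓨 => P p.1 p.2)) (hX : ∀ x, 0 < margX P x)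
    {Q : 𝓧 → ℝ} (hQ : IsPMF Q) : 0 ≤ klDiv Q (margX P) :=
  klDiv_nonneg hQ (fun x => (hX x).le) (sum_margX hP).le fun x _ => hX x

lemma sStar_nonneg (hP : IsPMF (fun p : 𝓧 × 𝓨 => P p.1 p.2)) (hX : ∀ x, 0 < margX P x) :
    0 ≤ sStar P :=
  Real.sSup_nonneg <| by
    rintro _ ⟨Q, hQ, -, rfl⟩
    exact div_nonneg (klDiv_chanOut_nonneg hP hX hQ) (klDiv_margX_nonneg hP hX hQ)

lemma klDiv_chanOut_le_sStar_mul (hP : IsPMF (fun p : 𝓧 × 𝓨 => P p.1 p.2))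
    (hX : ∀ x, 0 < margX P x) {Q : 𝓧 → ℝ} (hQ : IsPMF Q) :
    klDiv (chanOut P Q) (margY P) ≤ sStar P * klDiv Q (margX P) := by
  have hP0 : ∀ x y, 0 ≤ P x y := fun x y => hP.1 (x, y)
  rcases (klDiv_margX_nonneg hP hX hQ).eq_or_lt with h0 | hpos
  · rw [← h0, mul_zero]
    exact (klDiv_chanOut_le hP0 hX hQ.1).trans h0.ge
  have hne : Q ≠ margX P := by rintro rfl; simp at hpos
  have hbdd : BddAbove {r : ℝ | ∃ Q : 𝓧 → ℝ, IsPMF Q ∧ Q ≠ margX P ∧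
      r = klDiv (chanOut P Q) (margY P) / klDiv Q (margX P)} := by
    refine ⟨1, ?_⟩
    rintro _ ⟨Q', hQ', -, rfl⟩
    exact div_le_one_of_le₀ (klDiv_chanOut_le hP0 hX hQ'.1) (klDiv_margX_nonneg hP hX hQ')
  rw [← div_le_iff₀ hpos]
  exact le_csSup hbdd ⟨Q, hQ, hne, rfl⟩

end StrongDataProcessing

section MarkovChain

lemma exists_eq_mul_isPMF {𝓤 : Type*} {J : 𝓤 → 𝓧 → ℝ} (hJ : ∀ u x, 0 ≤ J u x) :
    ∃ (w : 𝓤 → ℝ) (q : 𝓤 → 𝓧 → ℝ), (∀ u, 0 ≤ w u) ∧ (∀ u x, J u x = w u * q u x) ∧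
      ∀ u, w u ≠ 0 → IsPMF (q u) := by
  refine ⟨fun u => ∑ x, J u x, fun u x => J u x / ∑ x', J u x',
    fun u => Finset.sum_nonneg fun x _ => hJ u x, fun u x => ?_, fun u hu => ?_⟩
  · refine (mul_div_cancel_of_imp' fun h => ?_).symm
    exact (Finset.sum_eq_zero_iff_of_nonneg fun x _ => hJ u x).1 h x (mem_univ x)
  · exact ⟨fun x => div_nonneg (hJ u x) (Finset.sum_nonneg fun x _ => hJ u x),
      by rw [← Finset.sum_div, div_self hu]⟩

variable {𝓤 : Type*} [Fintype 𝓤]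

lemma mutualInfo_eq_sum_mul_klDiv (G : 𝓧 → 𝓤 → ℝ) (w : 𝓤 → ℝ) (q : 𝓤 → 𝓧 → ℝ) (m : 𝓧 → ℝ)
    (hG : ∀ b i, G b i = w i * q i b) (hq : ∀ i, w i ≠ 0 → ∑ b, q i b = 1)
    (hm : ∀ b, ∑ i, G b i = m b) : mutualInfo G = ∑ i, w i * klDiv (q i) m := by
  simp only [mutualInfo, klDiv, Finset.mul_sum]
  rw [Finset.sum_comm]
  refine Finset.sum_congr rfl fun i _ => Finset.sum_congr rfl fun b _ => ?_
  rcases eq_or_ne (w i) 0 with hw | hw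
  · simp [hG, hw]
  have hY : margY G i = w i := by simp only [margY, hG, ← Finset.mul_sum, hq i hw, mul_one]
  rw [hY, show margX G b = m b from hm b, hG, mul_comm (m b), mul_div_mul_left _ _ hw]
  ring

variable {P : 𝓧 → 𝓨 → ℝ}

lemma mutualInfo_chanOut_eq_sum_mul_klDiv (hX : ∀ x, 0 < margX P x) {J : 𝓤 → 𝓧 → ℝ}
    {w : 𝓤 → ℝ} {q : 𝓤 → 𝓧 → ℝ} (hJ : ∀ u x, J u x = w u * q u x)
    (hq : ∀ u, w u ≠ 0 → ∑ x, q u x = 1) (hJm : ∀ x, ∑ u, J u x = margX P x) :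
    mutualInfo (fun y u => chanOut P (J u) y) =
      ∑ u, w u * klDiv (chanOut P (q u)) (margY P) := by
  refine mutualInfo_eq_sum_mul_klDiv _ w _ _ (fun y u => ?_) (fun u hu => ?_) fun y => ?_
  · rw [show J u = fun x => w u * q u x from funext (hJ u), chanOut_const_mul]
  · rw [sum_chanOut hX, hq u hu]
  · rw [sum_chanOut_apply, show (fun x => ∑ u, J u x) = margX P from funext hJm,
      chanOut_margX hX]

lemma mutualInfo_chanOut_nonneg (hP : IsPMF (fun p : 𝓧 × 𝓨 => P p.1 p.2))
    (hX : ∀ x, 0 < margX P x) {J : 𝓤 → 𝓧 → ℝ} (hJ0 : ∀ u x, 0 ≤ J u x)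
    (hJm : ∀ x, ∑ u, J u x = margX P x) : 0 ≤ mutualInfo (fun y u => chanOut P (J u) y) := by
  obtain ⟨w, q, hw, hJ, hq⟩ := exists_eq_mul_isPMF hJ0
  rw [mutualInfo_chanOut_eq_sum_mul_klDiv hX hJ (fun u hu => (hq u hu).2) hJm]
  refine Finset.sum_nonneg fun u _ => ?_
  rcases eq_or_ne (w u) 0 with h | h
  · simp [h]
  · exact mul_nonneg (hw u) (klDiv_chanOut_nonneg hP hX (hq u h))

lemma mutualInfo_chanOut_le_sStar_mul (hP : IsPMF (fun p : 𝓧 × 𝓨 => P p.1 p.2))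
    (hX : ∀ x, 0 < margX P x) {J : 𝓤 → 𝓧 → ℝ} (hJ0 : ∀ u x, 0 ≤ J u x)
    (hJm : ∀ x, ∑ u, J u x = margX P x) :
    mutualInfo (fun y u => chanOut P (J u) y) ≤ sStar P * mutualInfo (fun x u => J u x) := by
  obtain ⟨w, q, hw, hJ, hq⟩ := exists_eq_mul_isPMF hJ0
  rw [mutualInfo_chanOut_eq_sum_mul_klDiv hX hJ (fun u hu => (hq u hu).2) hJm,
    mutualInfo_eq_sum_mul_klDiv _ w q _ (fun x u => hJ u x) (fun u hu => (hq u hu).2) hJm,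
    Finset.mul_sum]
  refine Finset.sum_le_sum fun u _ => ?_
  rcases eq_or_ne (w u) 0 with h | h
  · simp [h]
  calc w u * klDiv (chanOut P (q u)) (margY P)
      ≤ w u * (sStar P * klDiv (q u) (margX P)) :=
        mul_le_mul_of_nonneg_left (klDiv_chanOut_le_sStar_mul hP hX (hq u h)) (hw u)
    _ = sStar P * (w u * klDiv (q u) (margX P)) := by ring

end MarkovChain

section MarkovRatios

variable {P : 𝓧 → 𝓨 → ℝ}

/-- `J` is the joint pmf of `(U, X)`; the chain `U ↔ X ↔ Y` then has `(Y, U)`-joint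
`(y, u) ↦ chanOut P (J u) y`. -/
def markovRatios (P : 𝓧 → 𝓨 → ℝ) : Set ℝ :=
  { r | ∃ (𝓤 : Type) (_ : Fintype 𝓤) (J : 𝓤 → 𝓧 → ℝ),
    IsPMF (fun p : 𝓤 × 𝓧 => J p.1 p.2) ∧ (∀ x, ∑ u, J u x = margX P x) ∧
    0 < mutualInfo (fun x u => J u x) ∧
    r = mutualInfo (fun y u => chanOut P (J u) y) / mutualInfo (fun x u => J u x) }

lemma le_sStar_of_mem_markovRatios (hP : IsPMF (fun p : 𝓧 × 𝓨 => P p.1 p.2))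
    (hX : ∀ x, 0 < margX P x) {r : ℝ} (hr : r ∈ markovRatios P) : r ≤ sStar P := by
  obtain ⟨𝓤, _, J, hJ, hJm, hpos, rfl⟩ := hr
  rw [div_le_iff₀ hpos]
  exact mutualInfo_chanOut_le_sStar_mul hP hX (fun u x => hJ.1 (u, x)) hJm

lemma bddAbove_markovRatios (hP : IsPMF (fun p : 𝓧 × 𝓨 => P p.1 p.2))
    (hX : ∀ x, 0 < margX P x) : BddAbove (markovRatios P) :=
  ⟨sStar P, fun _ => le_sStar_of_mem_markovRatios hP hX⟩

lemma sSup_markovRatios_nonneg (hP : IsPMF (fun p : 𝓧 × 𝓨 => P p.1 p.2))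
    (hX : ∀ x, 0 < margX P x) : 0 ≤ sSup (markovRatios P) :=
  Real.sSup_nonneg <| by
    rintro _ ⟨𝓤, _, J, hJ, hJm, hpos, rfl⟩
    exact div_nonneg (mutualInfo_chanOut_nonneg hP hX (fun u x => hJ.1 (u, x)) hJm) hpos.le

lemma sSup_markovRatios_le_sStar (hP : IsPMF (fun p : 𝓧 × 𝓨 => P p.1 p.2))
    (hX : ∀ x, 0 < margX P x) : sSup (markovRatios P) ≤ sStar P :=
  Real.sSup_le (fun _ => le_sStar_of_mem_markovRatios hP hX) (sStar_nonneg hP hX)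

open Filter Topology

/-- The ratio of the binary chain `P(U = 1) = ε`, `P_{X|U=1} = Q`,
`P_{X|U=0} = (P_X - ε Q) / (1 - ε)`; the `χ²` term bounds `(1 - ε) D(P_{X|U=0} ‖ P_X) / ε`. -/
lemma div_add_le_sSup_markovRatios (hP : IsPMF (fun p : 𝓧 × 𝓨 => P p.1 p.2))
    (hX : ∀ x, 0 < margX P x) {Q : 𝓧 → ℝ} (hQ : IsPMF Q) (hQX : 0 < klDiv Q (margX P))
    {ε : ℝ} (hε0 : 0 < ε) (hε1 : ε < 1) (hεQ : ∀ x, ε * Q x ≤ margX P x) :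
    klDiv (chanOut P Q) (margY P) /
        (klDiv Q (margX P) + ε / (1 - ε) * (chiSqDiv Q (margX P) / log 2)) ≤
      sSup (markovRatios P) := by
  have h1ε : 0 < 1 - ε := sub_pos.2 hε1
  set K := chiSqDiv Q (margX P) / log 2
  set R : 𝓧 → ℝ := fun x => (margX P x - ε * Q x) / (1 - ε)
  set w : Bool → ℝ := fun u => cond u ε (1 - ε)
  set q : Bool → 𝓧 → ℝ := fun u => cond u Q R
  set J : Bool → 𝓧 → ℝ := fun u x => w u * q u x
  have hR : IsPMF R := ⟨fun x => div_nonneg (sub_nonneg.2 (hεQ x)) h1ε.le, by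
    rw [← Finset.sum_div, Finset.sum_sub_distrib, sum_margX hP, ← Finset.mul_sum, hQ.2, mul_one,
      div_self h1ε.ne']⟩
  have hq : ∀ u, IsPMF (q u) := fun u => by cases u <;> assumption
  have hJm : ∀ x, ∑ u, J u x = margX P x := fun x => by
    simp only [J, w, q, R, Fintype.sum_bool, cond_true, cond_false]
    field_simp
    ring
  have hJ : IsPMF (fun p : Bool × 𝓧 => J p.1 p.2) := by
    refine ⟨fun ⟨u, x⟩ => mul_nonneg (by cases u <;> simp [w, hε0.le, h1ε.le]) ((hq u).1 x), ?_⟩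
    rw [Fintype.sum_prod_type_right]
    simp only [hJm, sum_margX hP]
  have hIX : mutualInfo (fun x u => J u x) =
      ε * klDiv Q (margX P) + (1 - ε) * klDiv R (margX P) := by
    rw [mutualInfo_eq_sum_mul_klDiv _ w q _ (fun _ _ => rfl) (fun u _ => (hq u).2) hJm,
      Fintype.sum_bool]
    rfl
  have hIY : mutualInfo (fun y u => chanOut P (J u) y) =
      ε * klDiv (chanOut P Q) (margY P) + (1 - ε) * klDiv (chanOut P R) (margY P) := by
    rw [mutualInfo_chanOut_eq_sum_mul_klDiv hX (fun _ _ => rfl) (fun u _ => (hq u).2) hJm,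
      Fintype.sum_bool]
    rfl
  have hDR : (1 - ε) * klDiv R (margX P) ≤ ε * (ε / (1 - ε) * K) :=
    calc (1 - ε) * klDiv R (margX P) ≤ (1 - ε) * (chiSqDiv R (margX P) / log 2) :=
          mul_le_mul_of_nonneg_left (klDiv_le_chiSqDiv hR.1 hX (by rw [hR.2, sum_margX hP]))
            h1ε.le
      _ = ε * (ε / (1 - ε) * K) := by
          rw [chiSqDiv_sub_mul_div _ _ hε1.ne]
          simp only [K]
          field_simp
  have hIXpos : 0 < mutualInfo (fun x u => J u x) := by
    rw [hIX]
    exact add_pos_of_pos_of_nonneg (mul_pos hε0 hQX)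
      (mul_nonneg h1ε.le (klDiv_margX_nonneg hP hX hR))
  calc klDiv (chanOut P Q) (margY P) / (klDiv Q (margX P) + ε / (1 - ε) * K)
      = ε * klDiv (chanOut P Q) (margY P) /
          (ε * klDiv Q (margX P) + ε * (ε / (1 - ε) * K)) := by
        rw [← mul_add, mul_div_mul_left _ _ hε0.ne']
    _ ≤ mutualInfo (fun y u => chanOut P (J u) y) / mutualInfo (fun x u => J u x) := by
        rw [hIX, hIY]
        refine div_le_div₀ ?_ ?_ (hIX ▸ hIXpos) (by linarith)
        · exact add_nonneg (mul_nonneg hε0.le (klDiv_chanOut_nonneg hP hX hQ))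
            (mul_nonneg h1ε.le (klDiv_chanOut_nonneg hP hX hR))
        · exact le_add_of_nonneg_right (mul_nonneg h1ε.le (klDiv_chanOut_nonneg hP hX hR))
    _ ≤ sSup (markovRatios P) :=
        le_csSup (bddAbove_markovRatios hP hX) ⟨Bool, inferInstance, J, hJ, hJm, hIXpos, rfl⟩

lemma sStar_le_sSup_markovRatios (hP : IsPMF (fun p : 𝓧 × 𝓨 => P p.1 p.2))
    (hX : ∀ x, 0 < margX P x) : sStar P ≤ sSup (markovRatios P) := by
  refine Real.sSup_le ?_ (sSup_markovRatios_nonneg hP hX)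
  rintro _ ⟨Q, hQ, -, rfl⟩
  rcases (klDiv_margX_nonneg hP hX hQ).eq_or_lt with h0 | hQX
  · rw [← h0, div_zero]
    exact sSup_markovRatios_nonneg hP hX
  have hlim : Tendsto (fun ε => klDiv (chanOut P Q) (margY P) /
      (klDiv Q (margX P) + ε / (1 - ε) * (chiSqDiv Q (margX P) / log 2))) (𝓝[>] 0)
      (𝓝 (klDiv (chanOut P Q) (margY P) / klDiv Q (margX P))) := by
    have : ContinuousAt (fun ε : ℝ => klDiv (chanOut P Q) (margY P) /
        (klDiv Q (margX P) + ε / (1 - ε) * (chiSqDiv Q (margX P) / log 2))) 0 := by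
      fun_prop (disch := simp [hQX.ne'])
    simpa using this.tendsto.mono_left nhdsWithin_le_nhds
  have hsmall : ∀ᶠ ε in 𝓝[>] (0 : ℝ), 0 < ε ∧ ε < 1 ∧ ∀ x, ε * Q x ≤ margX P x := by
    refine (eventually_mem_nhdsWithin (a := (0 : ℝ)) (s := Set.Ioi 0)).and (nhdsWithin_le_nhds ?_)
    refine (eventually_lt_nhds zero_lt_one).and (eventually_all.2 fun x => ?_)
    have : Tendsto (fun ε : ℝ => ε * Q x) (𝓝 0) (𝓝 0) := by
      simpa using (tendsto_id (x := 𝓝 (0 : ℝ))).mul_const (Q x)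
    exact (this.eventually_lt_const (hX x)).mono fun _ => le_of_lt
  exact le_of_tendsto hlim (hsmall.mono fun ε ⟨h0, h1, hQε⟩ =>
    div_add_le_sSup_markovRatios hP hX hQ hQX h0 h1 hQε)

end MarkovRatios

theorem sStar_eq_sup_MI_ratio_general (P : 𝓧 → 𝓨 → ℝ)
    (hP : IsPMF (fun p : 𝓧 × 𝓨 => P p.1 p.2))
    (hX : ∀ x, 0 < margX P x) :
    sStar P = sSup { r : ℝ |
      ∃ (𝓤 : Type) (_ : Fintype 𝓤) (J : 𝓤 → 𝓧 → ℝ),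
        IsPMF (fun p : 𝓤 × 𝓧 => J p.1 p.2) ∧
        (∀ x, ∑ u, J u x = margX P x) ∧
        0 < mutualInfo (fun (x : 𝓧) (u : 𝓤) => J u x) ∧
        r = mutualInfo (fun (y : 𝓨) (u : 𝓤) => ∑ x, J u x * (P x y / margX P x)) /
            mutualInfo (fun (x : 𝓧) (u : 𝓤) => J u x) } :=
  le_antisymm (sStar_le_sSup_markovRatios hP hX) (sSup_markovRatios_le_sStar hP hX)

/-- tightness of the strong DPI constant.  If `I(X;Y) > 0`, then
`s*(X;Y)` equals the supremum of `I(Y;U)/I(X;U)` over all finite alphabets `𝓤` and all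
Markov chains `U ↔ X ↔ Y` (joints of the form `p(u,x) P_{Y|X}(y|x)` with `(X,Y)`-marginal
`P`) having `I(X;U) > 0`.  Here such a Markov chain is described by the joint pmf `J` of
`(U,X)`, whose `x`-marginal must be `P_X`; the `(U,Y)`-joint is then
`(u,y) ↦ ∑ x, J u x * P x y / P_X x`. -/
theorem sStar_eq_sup_MI_ratio (P : 𝓧 → 𝓨 → ℝ)
    (hP : IsPMF (fun p : 𝓧 × 𝓨 => P p.1 p.2))
    (hX : ∀ x, 0 < margX P x) (hY : ∀ y, 0 < margY P y)
    (hXY : 0 < mutualInfo P) :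
    sStar P = sSup { r : ℝ |
      ∃ (𝓤 : Type) (_ : Fintype 𝓤) (J : 𝓤 → 𝓧 → ℝ),
        IsPMF (fun p : 𝓤 × 𝓧 => J p.1 p.2) ∧
        (∀ x, ∑ u, J u x = margX P x) ∧
        0 < mutualInfo (fun (x : 𝓧) (u : 𝓤) => J u x) ∧
        r = mutualInfo (fun (y : 𝓨) (u : 𝓤) => ∑ x, J u x * (P x y / margX P x)) /
            mutualInfo (fun (x : 𝓧) (u : 𝓤) => J u x) } :=
  sStar_eq_sup_MI_ratio_general P hP hX
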